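/- Let n ≥ 2, let s, ŝ ∈ ℝⁿ with δ = ‖s − ŝ‖ > 0, let r > 0, and let Y be distributed according to the normalized (uniform) surface measure on the sphere {y ∈ ℝⁿ : ‖y − s‖ = r}. If r > δ/2 then P(‖Y − ŝ‖ ≤ ‖Y − s‖) = (Γ(n/2)/(√π Γ((n−1)/2))) ∫_0^{arccos(δ/(2r))} sin^{n−2} φ dφ, and if r ≤ δ/2 then P(‖Y − ŝ‖ ≤ ‖Y − s‖) = 0. -/

import Mathlib

open MeasureTheory

/-- The normalized (uniform) surface measure on the sphere
`{y ∈ ℝⁿ : ‖y - c‖ = r}`: the pushforward of the normalized surface measure on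
the unit sphere under `y ↦ c + r • y`. -/
noncomputable def sphereUniform (n : ℕ) (c : EuclideanSpace ℝ (Fin n)) (r : ℝ) :
    Measure (EuclideanSpace ℝ (Fin n)) :=
  ((volume : Measure (EuclideanSpace ℝ (Fin n))).toSphere Set.univ)⁻¹ •
    Measure.map
      (fun y : Metric.sphere (0 : EuclideanSpace ℝ (Fin n)) 1 =>
        c + r • (y : EuclideanSpace ℝ (Fin n)))
      (volume : Measure (EuclideanSpace ℝ (Fin n))).toSphere

/-! Writing `Y = s + r • u` with `u` on the unit sphere, `‖Y - s'‖ ≤ ‖Y - s‖` becomes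
`⟪e, u⟫ ≥ t` for the unit vector `e` pointing from `s` to `s'` and `t = δ / (2r)`, so the
probability is the normalized measure of a spherical cap. Mathlib's surface measure is
`dim × volume` of the cone over the cap inside the unit ball. Slicing that cone orthogonally to `e`
gives `(n-1)`-balls of radius `min (√(1 - a²)) (a √(1 - t²) / t)` at height `a`; the substitution
`a = cos φ` and the reduction formula for `∫ sin ^ n` turn the resulting one-dimensional integral
into `(n-1)/n ∫₀^{arccos t} sin ^ (n-2)`, and dividing by the volume of the unit ball leaves the
Gamma factor. For `t ≥ 1` every slice is at most a point. -/

open Set Real Metric Module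
open scoped RealInnerProductSpace Pointwise

theorem integral_sqrt_one_sub_sq_pow_eq_integral_sin_pow (m : ℕ) {t : ℝ} (ht₀ : -1 ≤ t)
    (ht₁ : t ≤ 1) :
    ∫ a in t..1, √(1 - a ^ 2) ^ m = ∫ φ in 0..arccos t, sin φ ^ (m + 1) := by
  have hsub := intervalIntegral.integral_comp_mul_deriv (a := 0) (b := arccos t)
    (f := cos) (f' := fun φ => -sin φ) (g := fun a => √(1 - a ^ 2) ^ m)
    (fun φ _ => hasDerivAt_cos φ) continuous_sin.neg.continuousOn (by fun_prop)
  rw [cos_zero, cos_arccos ht₀ ht₁] at hsub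
  rw [intervalIntegral.integral_symm, ← hsub, ← intervalIntegral.integral_neg]
  refine intervalIntegral.integral_congr fun φ hφ => ?_
  rw [uIcc_of_le (arccos_nonneg t)] at hφ
  have hsin : 0 ≤ sin φ := sin_nonneg_of_nonneg_of_le_pi hφ.1 (hφ.2.trans (arccos_le_pi t))
  simp only [Function.comp_apply, ← sin_sq, sqrt_sq hsin]
  ring

/-- The slice of the cone `{x | ‖x‖ < 1, t‖x‖ ≤ x₀}` at height `x₀ = a` is a ball of this radius. -/
noncomputable def coneSliceRadius (t a : ℝ) : ℝ := min (√(1 - a ^ 2)) (a * (√(1 - t ^ 2) / t))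

theorem sq_mul_sqrt_one_sub_sq_div {t : ℝ} (ht : t ^ 2 ≤ 1) (a : ℝ) :
    (a * (√(1 - t ^ 2) / t)) ^ 2 = a ^ 2 * (1 - t ^ 2) / t ^ 2 := by
  rw [mul_pow, div_pow, sq_sqrt (by linarith)]
  ring

theorem coneSliceRadius_of_le {t a : ℝ} (ht₀ : 0 < t) (ht₁ : t ≤ 1) (ha : 0 ≤ a) (hat : a ≤ t) :
    coneSliceRadius t a = a * (√(1 - t ^ 2) / t) := by
  refine min_eq_right (le_sqrt_of_sq_le ?_)
  rw [sq_mul_sqrt_one_sub_sq_div (by nlinarith) a, div_le_iff₀ (pow_pos ht₀ 2)]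
  nlinarith [mul_le_mul hat hat ha ht₀.le]

theorem coneSliceRadius_of_ge {t a : ℝ} (ht₀ : 0 < t) (ht₁ : t ≤ 1) (hta : t ≤ a) :
    coneSliceRadius t a = √(1 - a ^ 2) := by
  refine min_eq_left (sqrt_le_iff.mpr ⟨mul_nonneg (ht₀.le.trans hta) (by positivity), ?_⟩)
  rw [sq_mul_sqrt_one_sub_sq_div (by nlinarith) a, le_div_iff₀ (pow_pos ht₀ 2)]
  nlinarith [mul_le_mul hta hta ht₀.le (ht₀.le.trans hta)]

theorem integral_coneSliceRadius_pow (k : ℕ) {t : ℝ} (ht₀ : 0 < t) (ht₁ : t ≤ 1) :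
    ∫ a in 0..1, coneSliceRadius t a ^ (k + 1) =
      (k + 1) / (k + 2) * ∫ φ in 0..arccos t, sin φ ^ k := by
  have hcont : Continuous fun a => coneSliceRadius t a ^ (k + 1) := by
    unfold coneSliceRadius; fun_prop
  rw [← intervalIntegral.integral_add_adjacent_intervals (b := t)
    (hcont.intervalIntegrable _ _) (hcont.intervalIntegrable _ _)]
  have hlow : ∫ a in 0..t, coneSliceRadius t a ^ (k + 1) =
      √(1 - t ^ 2) ^ (k + 1) * t / (k + 2) := by
    rw [intervalIntegral.integral_congr (g := fun a => (√(1 - t ^ 2) / t) ^ (k + 1) * a ^ (k + 1))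
      fun a ha => by
        rw [uIcc_of_le ht₀.le] at ha
        simp only [coneSliceRadius_of_le ht₀ ht₁ ha.1 ha.2, mul_pow, mul_comm],
      intervalIntegral.integral_const_mul, integral_pow, div_pow]
    field_simp
    push_cast
    ring
  have hhigh : ∫ a in t..1, coneSliceRadius t a ^ (k + 1) = ∫ a in t..1, √(1 - a ^ 2) ^ (k + 1) :=
    intervalIntegral.integral_congr fun a ha => by
      rw [uIcc_of_le ht₁] at ha
      simp only [coneSliceRadius_of_ge ht₀ ht₁ ha.1]
  rw [hlow, hhigh, integral_sqrt_one_sub_sq_pow_eq_integral_sin_pow _ (by linarith) ht₁,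
    integral_sin_pow, sin_arccos, cos_arccos (by linarith) ht₁, sin_zero, zero_pow k.succ_ne_zero]
  ring

theorem coneSliceRadius_nonneg {t a : ℝ} (ht₀ : 0 < t) (ha : 0 ≤ a) : 0 ≤ coneSliceRadius t a :=
  le_min (sqrt_nonneg _) (by positivity)

theorem mem_Ioo_of_coneSliceRadius_pos {t a : ℝ} (ht₀ : 0 < t) (h : 0 < coneSliceRadius t a) :
    a ∈ Ioo 0 1 := by
  have h₁ := h.trans_le (min_le_left _ _)
  have h₂ := h.trans_le (min_le_right _ _)
  refine ⟨pos_of_mul_pos_left h₂ (by positivity), ?_⟩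
  by_contra! ha
  exact h₁.ne' (sqrt_eq_zero'.mpr (by nlinarith))

theorem lintegral_ofReal_coneSliceRadius_pow (k : ℕ) {t : ℝ} (ht₀ : 0 < t) :
    ∫⁻ a, ENNReal.ofReal (coneSliceRadius t a) ^ (k + 1) =
      ENNReal.ofReal (∫ a in 0..1, coneSliceRadius t a ^ (k + 1)) := by
  have hsupp : Function.support (fun a => ENNReal.ofReal (coneSliceRadius t a) ^ (k + 1)) ⊆
      Ioc 0 1 := fun a ha =>
    Ioo_subset_Ioc_self (mem_Ioo_of_coneSliceRadius_pos ht₀ (by simpa using ha))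
  have hcont : Continuous fun a => coneSliceRadius t a ^ (k + 1) := by
    unfold coneSliceRadius; fun_prop
  rw [← setLIntegral_eq_of_support_subset hsupp, intervalIntegral.integral_of_le zero_le_one,
    ofReal_integral_eq_lintegral_ofReal (hcont.integrableOn_Icc.mono_set Ioc_subset_Icc_self)
      ((ae_restrict_iff' measurableSet_Ioc).mpr (ae_of_all _ fun a ha =>
        pow_nonneg (coneSliceRadius_nonneg ht₀ ha.1.le) _))]
  exact setLIntegral_congr_fun measurableSet_Ioc fun a ha =>
    (ENNReal.ofReal_pow (coneSliceRadius_nonneg ht₀ ha.1.le) _).symm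

theorem MeasureTheory.Measure.addHaar_ball_inter_closedBall {V : Type*} [NormedAddCommGroup V]
    [NormedSpace ℝ V] [MeasurableSpace V] [BorelSpace V] [FiniteDimensional ℝ V] [Nontrivial V]
    (μ : Measure V) [μ.IsAddHaarMeasure] (x : V) (r s : ℝ) :
    μ (ball x r ∩ closedBall x s) = μ (ball x (min r s)) := by
  rcases lt_or_ge s r with hsr | hrs
  · rw [inter_eq_right.mpr (closedBall_subset_ball hsr), min_eq_right hsr.le,
      Measure.addHaar_closedBall_eq_addHaar_ball]
  · rw [inter_eq_left.mpr (ball_subset_closedBall.trans (closedBall_subset_closedBall hrs)),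
      min_eq_left hrs]

section Cone

variable {E : Type*} [NormedAddCommGroup E] [InnerProductSpace ℝ E]

theorem norm_sub_le_norm_iff_sq_le_inner (x v : E) : ‖x - v‖ ≤ ‖x‖ ↔ ‖v‖ ^ 2 ≤ 2 * ⟪v, x⟫ := by
  rw [← sq_le_sq₀ (norm_nonneg _) (norm_nonneg _), norm_sub_sq_real, real_inner_comm]
  constructor <;> intro h <;> linarith

def sphericalCap (e : E) (t : ℝ) : Set (sphere (0 : E) 1) := {u | t ≤ ⟪e, (u : E)⟫}

theorem preimage_setOf_norm_sub_le_eq_sphericalCap {s s' : E} (hne : s ≠ s') {r : ℝ} (hr : 0 < r) :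
    (fun u : sphere (0 : E) 1 => s + r • (u : E)) ⁻¹' {y | ‖y - s'‖ ≤ ‖y - s‖} =
      sphericalCap (‖s - s'‖⁻¹ • (s' - s)) (‖s - s'‖ / (2 * r)) := by
  have hδ : 0 < ‖s - s'‖ := norm_pos_iff.mpr (sub_ne_zero.mpr hne)
  ext u
  have h₁ : s + r • (u : E) - s' = r • (u : E) - (s' - s) := by abel
  have h₂ : s + r • (u : E) - s = r • (u : E) := by abel
  simp only [mem_preimage, mem_ofPred_eq, sphericalCap, h₁, h₂,
    norm_sub_le_norm_iff_sq_le_inner, real_inner_smul_left, real_inner_smul_right,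
    norm_sub_rev s' s, inv_mul_eq_div, div_le_div_iff₀ (by positivity : 0 < 2 * r) hδ]
  constructor <;> intro h <;> linarith

theorem measurableSet_sphericalCap [MeasurableSpace E] [OpensMeasurableSpace E] (e : E) (t : ℝ) :
    MeasurableSet (sphericalCap e t) :=
  measurableSet_le measurable_const (by fun_prop)

def capCone (e : E) (t : ℝ) : Set E := Ioo (0 : ℝ) 1 • ((↑) '' sphericalCap e t)

theorem mem_capCone {e x : E} {t : ℝ} :
    x ∈ capCone e t ↔ 0 < ‖x‖ ∧ ‖x‖ < 1 ∧ t * ‖x‖ ≤ ⟪e, x⟫ := by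
  constructor
  · rintro ⟨a, ⟨ha₀, ha₁⟩, _, ⟨u, hu, rfl⟩, rfl⟩
    have hu₁ : ‖(u : E)‖ = 1 := norm_eq_of_mem_sphere u
    simp only [norm_smul, hu₁, mul_one, Real.norm_of_nonneg ha₀.le, real_inner_smul_right]
    exact ⟨ha₀, ha₁, by nlinarith [show t ≤ ⟪e, (u : E)⟫ from hu]⟩
  · rintro ⟨hx₀, hx₁, hx⟩
    refine ⟨‖x‖, ⟨hx₀, hx₁⟩, ‖x‖⁻¹ • x, ⟨⟨‖x‖⁻¹ • x, ?_⟩, ?_, rfl⟩, ?_⟩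
    · rw [mem_sphere_zero_iff_norm, norm_smul, norm_inv, norm_norm, inv_mul_cancel₀ hx₀.ne']
    · show t ≤ ⟪e, ‖x‖⁻¹ • x⟫
      rwa [real_inner_smul_right, le_inv_mul_iff₀ hx₀, mul_comm]
    · simp [smul_smul, mul_inv_cancel₀ hx₀.ne']

theorem toSphere_sphericalCap [MeasurableSpace E] [BorelSpace E] (μ : Measure E) (e : E) (t : ℝ) :
    μ.toSphere (sphericalCap e t) = finrank ℝ E * μ (capCone e t) :=
  μ.toSphere_apply' (measurableSet_sphericalCap e t)

noncomputable def splitAlong (e : E) (he : ‖e‖ = 1) : E ≃ₗᵢ[ℝ] WithLp 2 (ℝ × (ℝ ∙ e)ᗮ) :=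
  (ℝ ∙ e).orthogonalDecomposition.trans
    (LinearIsometryEquiv.withLpProdCongr 2 (LinearIsometryEquiv.toSpanUnitSingleton e he).symm
      (LinearIsometryEquiv.refl ℝ _))

theorem splitAlong_fst (e : E) (he : ‖e‖ = 1) (x : E) : (splitAlong e he x).fst = ⟪e, x⟫ := by
  change (LinearIsometryEquiv.toSpanUnitSingleton e he).symm
    ((ℝ ∙ e).orthogonalProjectionOnto x) = _
  rw [LinearIsometryEquiv.symm_apply_eq]
  ext
  simp [Submodule.starProjection_unit_singleton ℝ he]

theorem norm_sq_eq_splitAlong_fst_sq_add_norm_snd_sq (e : E) (he : ‖e‖ = 1) (x : E) :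
    ‖x‖ ^ 2 = (splitAlong e he x).fst ^ 2 + ‖(splitAlong e he x).snd‖ ^ 2 := by
  rw [← (splitAlong e he).norm_map x, WithLp.prod_norm_sq_eq_of_L2, Real.norm_eq_abs, sq_abs]

theorem finrank_orthogonal_span_of_norm_eq_one {k : ℕ} (hE : finrank ℝ E = k + 2) {e : E}
    (he : ‖e‖ = 1) : finrank ℝ (ℝ ∙ e)ᗮ = k + 1 :=
  have : Fact (finrank ℝ E = (k + 1) + 1) := ⟨hE⟩
  Submodule.finrank_orthogonal_span_singleton (norm_ne_zero_iff.mp (he ▸ one_ne_zero))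

theorem capCone_slice_eq_ball_inter_closedBall {V : Type*} [NormedAddCommGroup V]
    [InnerProductSpace ℝ V] {t a : ℝ} (ht₀ : 0 < t) (ht₁ : t ≤ 1) (ha : 0 < a) :
    {y : V | 0 < a ∧ a ^ 2 + ‖y‖ ^ 2 < 1 ∧ t ^ 2 * ‖y‖ ^ 2 ≤ (1 - t ^ 2) * a ^ 2} =
      ball 0 √(1 - a ^ 2) ∩ closedBall 0 (a * (√(1 - t ^ 2) / t)) := by
  ext y
  rw [mem_inter_iff, mem_ball_zero_iff, mem_closedBall_zero_iff, lt_sqrt (norm_nonneg y),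
    ← sq_le_sq₀ (norm_nonneg y) (by positivity), sq_mul_sqrt_one_sub_sq_div (by nlinarith) a,
    le_div_iff₀ (pow_pos ht₀ 2)]
  simp only [mem_ofPred_eq, ha, true_and]
  constructor <;> rintro ⟨h₁, h₂⟩ <;> exact ⟨by linarith, by linarith⟩

end Cone

section Volume

variable {E : Type*} [NormedAddCommGroup E] [InnerProductSpace ℝ E] [FiniteDimensional ℝ E]
  [MeasurableSpace E] [BorelSpace E]

theorem volume_capCone_eq_lintegral {e : E} (he : ‖e‖ = 1) {t : ℝ} (ht : 0 < t) :
    volume (capCone e t) = ∫⁻ a, volume {y : (ℝ ∙ e)ᗮ |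
      0 < a ∧ a ^ 2 + ‖y‖ ^ 2 < 1 ∧ t ^ 2 * ‖y‖ ^ 2 ≤ (1 - t ^ 2) * a ^ 2} := by
  set Q : Set (ℝ × (ℝ ∙ e)ᗮ) :=
    {p | 0 < p.1 ∧ p.1 ^ 2 + ‖p.2‖ ^ 2 < 1 ∧ t ^ 2 * ‖p.2‖ ^ 2 ≤ (1 - t ^ 2) * p.1 ^ 2}
  have hQ : MeasurableSet Q := by measurability
  have hpre : capCone e t = (WithLp.ofLp ∘ splitAlong e he) ⁻¹' Q := by
    ext x
    have hsq := norm_sq_eq_splitAlong_fst_sq_add_norm_snd_sq e he x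
    simp only [mem_capCone, ← splitAlong_fst e he, mem_preimage, Function.comp_apply,
      WithLp.ofLp_fst, WithLp.ofLp_snd, Q, mem_ofPred_eq]
    generalize (splitAlong e he x).fst = a at hsq ⊢
    generalize ‖(splitAlong e he x).snd‖ = ρ at hsq ⊢
    have hx := norm_nonneg x
    constructor
    · rintro ⟨hx₀, hx₁, hxa⟩
      have ha : 0 < a := (mul_pos ht hx₀).trans_le hxa
      refine ⟨ha, by nlinarith, by nlinarith [mul_le_mul hxa hxa (by positivity) ha.le]⟩
    · rintro ⟨ha, h₁, h₂⟩
      have hx₀ : 0 < ‖x‖ := by nlinarith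
      refine ⟨hx₀, by nlinarith, ?_⟩
      nlinarith [mul_pos ht hx₀]
  rw [hpre, ((WithLp.volume_preserving_ofLp ℝ _).comp (splitAlong e he).measurePreserving)
    |>.measure_preimage hQ.nullMeasurableSet, Measure.volume_eq_prod, Measure.prod_apply hQ]
  rfl

theorem volume_capCone_slice {V : Type*} [NormedAddCommGroup V] [InnerProductSpace ℝ V]
    [FiniteDimensional ℝ V] [MeasurableSpace V] [BorelSpace V] [Nontrivial V]
    {t : ℝ} (ht₀ : 0 < t) (ht₁ : t ≤ 1) (a : ℝ) :
    volume {y : V | 0 < a ∧ a ^ 2 + ‖y‖ ^ 2 < 1 ∧ t ^ 2 * ‖y‖ ^ 2 ≤ (1 - t ^ 2) * a ^ 2} =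
      volume (ball (0 : V) (coneSliceRadius t a)) := by
  rcases le_or_gt a 0 with ha | ha
  · have hR : coneSliceRadius t a ≤ 0 :=
      (min_le_right _ _).trans (mul_nonpos_of_nonpos_of_nonneg ha (by positivity))
    simp [ha.not_gt, ball_eq_empty.mpr hR]
  · rw [capCone_slice_eq_ball_inter_closedBall ht₀ ht₁ ha, Measure.addHaar_ball_inter_closedBall]
    rfl

theorem volume_capCone {k : ℕ} (hE : finrank ℝ E = k + 2) {e : E} (he : ‖e‖ = 1) {t : ℝ}
    (ht₀ : 0 < t) (ht₁ : t ≤ 1) :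
    volume (capCone e t) = ENNReal.ofReal (∫ a in 0..1, coneSliceRadius t a ^ (k + 1)) *
      ENNReal.ofReal (√π ^ (k + 1) / Gamma ((k + 1 : ℕ) / 2 + 1)) := by
  have hV := finrank_orthogonal_span_of_norm_eq_one hE he
  have : Nontrivial (ℝ ∙ e)ᗮ := Module.nontrivial_of_finrank_pos (by rw [hV]; omega)
  simp_rw [volume_capCone_eq_lintegral he ht₀, volume_capCone_slice ht₀ ht₁,
    InnerProductSpace.volume_ball, hV]
  rw [lintegral_mul_const' _ _ ENNReal.ofReal_ne_top, lintegral_ofReal_coneSliceRadius_pow k ht₀]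

theorem volume_capCone_of_one_le {k : ℕ} (hE : finrank ℝ E = k + 2) {e : E} (he : ‖e‖ = 1)
    {t : ℝ} (ht : 1 ≤ t) : volume (capCone e t) = 0 := by
  have hV := finrank_orthogonal_span_of_norm_eq_one hE he
  have : Nontrivial (ℝ ∙ e)ᗮ := Module.nontrivial_of_finrank_pos (by rw [hV]; omega)
  rw [volume_capCone_eq_lintegral he (by linarith)]
  refine (lintegral_congr fun a => measure_mono_null (fun y hy => ?_) (measure_singleton 0)).trans
    lintegral_zero
  have ht₂ : 1 ≤ t ^ 2 := one_le_pow₀ ht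
  have : ‖y‖ ^ 2 ≤ 0 := by
    nlinarith [hy.2.2, mul_le_mul_of_nonneg_right ht₂ (sq_nonneg ‖y‖),
      mul_nonpos_of_nonpos_of_nonneg (by linarith : 1 - t ^ 2 ≤ 0) (sq_nonneg a)]
  simpa using this

theorem toReal_toSphere_sphericalCap_div_univ {k : ℕ} (hE : finrank ℝ E = k + 2) {e : E}
    (he : ‖e‖ = 1) {t : ℝ} (ht₀ : 0 < t) (ht₁ : t ≤ 1) :
    ((volume : Measure E).toSphere (sphericalCap e t) / (volume : Measure E).toSphere univ).toReal =
      Gamma ((k + 2) / 2) / (√π * Gamma ((k + 1) / 2)) * ∫ φ in 0..arccos t, sin φ ^ k := by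
  have hI : 0 ≤ ∫ a in 0..1, coneSliceRadius t a ^ (k + 1) :=
    intervalIntegral.integral_nonneg zero_le_one fun a ha =>
      pow_nonneg (coneSliceRadius_nonneg ht₀ ha.1) _
  have : Nontrivial E := Module.nontrivial_of_finrank_pos (R := ℝ) (by omega)
  rw [toSphere_sphericalCap, Measure.toSphere_apply_univ,
    volume_capCone hE he ht₀ ht₁, InnerProductSpace.volume_ball, hE]
  simp only [ENNReal.toReal_div, ENNReal.toReal_mul, ENNReal.toReal_pow, ENNReal.toReal_natCast,
    ENNReal.toReal_ofReal hI, ENNReal.toReal_ofReal zero_le_one]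
  rw [ENNReal.toReal_ofReal (by positivity), ENNReal.toReal_ofReal (by positivity),
    integral_coneSliceRadius_pow k ht₀ ht₁]
  push_cast
  rw [Gamma_add_one (by positivity), Gamma_add_one (by positivity)]
  have : 0 < Gamma ((k + 1) / 2) := Gamma_pos_of_pos (by positivity)
  have : 0 < Gamma ((k + 2) / 2) := Gamma_pos_of_pos (by positivity)
  have : 0 < √π := sqrt_pos.mpr pi_pos
  field_simp
  ring

end Volume

theorem sphereUniform_apply (n : ℕ) (c : EuclideanSpace ℝ (Fin n)) (r : ℝ)
    {S : Set (EuclideanSpace ℝ (Fin n))} (hS : MeasurableSet S) :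
    sphereUniform n c r S =
      (volume : Measure (EuclideanSpace ℝ (Fin n))).toSphere
          ((fun u : sphere (0 : EuclideanSpace ℝ (Fin n)) 1 => c + r • (u : _)) ⁻¹' S) /
        (volume : Measure (EuclideanSpace ℝ (Fin n))).toSphere univ := by
  rw [sphereUniform, Measure.smul_apply, Measure.map_apply (by fun_prop) hS, smul_eq_mul,
    ENNReal.div_eq_inv_mul]

theorem sphere_bound_conditional_pairwise
    (n : ℕ) (hn : 2 ≤ n) (s s' : EuclideanSpace ℝ (Fin n)) (hne : s ≠ s')
    (r : ℝ) (hr : 0 < r) :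
    (‖s - s'‖ / 2 < r →
      ((sphereUniform n s r) {y | ‖y - s'‖ ≤ ‖y - s‖}).toReal =
        (Real.Gamma ((n : ℝ) / 2) /
            (Real.sqrt Real.pi * Real.Gamma (((n : ℝ) - 1) / 2))) *
          ∫ φ in (0 : ℝ)..Real.arccos (‖s - s'‖ / (2 * r)), Real.sin φ ^ (n - 2)) ∧
    (r ≤ ‖s - s'‖ / 2 →
      ((sphereUniform n s r) {y | ‖y - s'‖ ≤ ‖y - s‖}).toReal = 0) := by
  obtain ⟨k, rfl⟩ : ∃ k, n = k + 2 := ⟨n - 2, by omega⟩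
  have hE : finrank ℝ (EuclideanSpace ℝ (Fin (k + 2))) = k + 2 := finrank_euclideanSpace_fin
  have hδ : 0 < ‖s - s'‖ := norm_pos_iff.mpr (sub_ne_zero.mpr hne)
  have he : ‖‖s - s'‖⁻¹ • (s' - s)‖ = 1 := by
    rw [norm_smul, norm_inv, norm_norm, norm_sub_rev s', inv_mul_cancel₀ hδ.ne']
  have hS : MeasurableSet {y : EuclideanSpace ℝ (Fin (k + 2)) | ‖y - s'‖ ≤ ‖y - s‖} :=
    measurableSet_le (by fun_prop) (by fun_prop)
  rw [sphereUniform_apply _ _ _ hS, preimage_setOf_norm_sub_le_eq_sphericalCap hne hr]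
  refine ⟨fun hfar => ?_, fun hnear => ?_⟩
  · rw [toReal_toSphere_sphericalCap_div_univ hE he (by positivity)
      ((div_le_one (by positivity)).mpr (by linarith)), Nat.add_sub_cancel]
    push_cast
    ring_nf
  · rw [toSphere_sphericalCap, volume_capCone_of_one_le hE he
      ((one_le_div (by positivity)).mpr (by linarith))]
    simp
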